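/- arXiv:0912.3652 — 2 statements merged into one kernel-verified Lean document; each statement's English description precedes it below -/
import Mathlib

section
/- Let {L_t} be a Lévy process (independent stationary increments, L_0 = 0) whose marginals admit densities. Then for 0 ≤ t_1 < ⋯ < t_m < t ≤ T, the conditional law of L_t given (L_{t_1}, …, L_{t_m}, L_T) equals the conditional law of L_t given (L_{t_m}, L_T); i.e., the bridge of the Lévy process pinned at L_T = x is a Markov process. -/
/-!
Put `V = (L_{t_0}, …, L_{t_m})` and `D = (L_t - L_{t_m}, L_T - L_t)`. Independence of increments
together with `L_0 = 0` makes `V` independent of `D`, while `(L_t, L_T)` is a function of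
`(L_{t_m}, D)`. Given `V`, the joint law of `(L_t, L_T)` therefore depends on `V` only through
`L_{t_m}`. Testing against the sets `{V ∈ A, L_T ∈ C}` shows that the kernel
`(z, w) ↦ law(L_t | L_{t_m} = z, L_T = w)`, evaluated at `(L_{t_m}, L_T)`, is also a conditional
law of `L_t` given `(V, L_T)`.
-/

open MeasureTheory ProbabilityTheory Real
open scoped ENNReal NNReal

lemma MeasurableSpace.comap_pi_eq_iSup {Ω ι : Type*} {β : ι → Type*}
    [m : ∀ i, MeasurableSpace (β i)] (f : ∀ i, Ω → β i) :
    MeasurableSpace.pi.comap (fun ω i => f i ω) = ⨆ i, (m i).comap (f i) := by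
  simp_rw [MeasurableSpace.pi, MeasurableSpace.comap_iSup, MeasurableSpace.comap_comp]
  rfl

namespace ProbabilityTheory

lemma iIndepFun.indepFun_castAdd_natAdd {Ω β : Type*} [MeasurableSpace Ω] [MeasurableSpace β]
    {P : Measure Ω} {k n : ℕ} {f : Fin (k + n) → Ω → β} (hf_indep : iIndepFun f P)
    (hf : ∀ i, Measurable (f i)) :
    IndepFun (fun ω (i : Fin k) => f (Fin.castAdd n i) ω)
      (fun ω (j : Fin n) => f (Fin.natAdd k j) ω) P := by
  classical
  have hdisj :
      Disjoint (Finset.univ.map (Fin.castAddEmb n)) (Finset.univ.map (Fin.natAddEmb k)) := by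
    simp only [Finset.disjoint_left, Finset.mem_map, Finset.mem_univ, true_and]
    rintro _ ⟨i, rfl⟩ ⟨j, hj⟩
    simp only [Fin.natAddEmb_apply, Fin.coe_castAddEmb, Fin.ext_iff, Fin.val_natAdd,
      Fin.val_castAdd] at hj
    omega
  exact (hf_indep.indepFun_finset _ _ hdisj hf).comp
    (φ := fun x i => x ⟨Fin.castAdd n i, by simp⟩) (ψ := fun x j => x ⟨Fin.natAdd k j, by simp⟩)
    (measurable_pi_lambda _ fun _ => measurable_pi_apply _)
    (measurable_pi_lambda _ fun _ => measurable_pi_apply _)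

section IndepIncrements

variable {Ω ι E : Type*} [MeasurableSpace Ω] {P : Measure Ω} [Preorder ι] [AddCommGroup E]
  [MeasurableSpace E] [MeasurableAdd₂ E] [MeasurableSub₂ E] {X : ι → Ω → E}

lemma HasIndepIncrements.indepFun_values_increments (hX : HasIndepIncrements X P)
    (hXm : ∀ s, Measurable (X s)) {τ : ℕ → ι} (hτ : Monotone τ)
    (hτ0 : ∀ᵐ ω ∂P, X (τ 0) ω = 0) (k n : ℕ) :
    IndepFun (fun ω (i : Fin k) => X (τ (i + 1)) ω)
      (fun ω (j : Fin n) => X (τ (k + j + 1)) ω - X (τ (k + j)) ω) P := by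
  have hJ : iIndepFun (fun (i : Fin (k + n)) ω => X (τ (i + 1)) ω - X (τ i) ω) P :=
    (hX.nat hτ).precomp Fin.val_injective
  -- `X (τ (i + 1))` is the telescoping sum of the first `i + 1` increments
  refine (hJ.indepFun_castAdd_natAdd fun _ => (hXm _).sub (hXm _)).comp
    (φ := fun x (i : Fin k) => ∑ l : Fin (i + 1), x (Fin.castLE i.isLt l)) (ψ := id)
    (by fun_prop) measurable_id |>.congr ?_ .rfl
  filter_upwards [hτ0] with ω hω
  funext i
  simp only [Function.comp_apply, Fin.val_castLE, Fin.val_castAdd]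
  rw [Fin.sum_univ_eq_sum_range (fun l => X (τ (l + 1)) ω - X (τ l) ω),
    Finset.sum_range_sub (fun l => X (τ l) ω), hω, sub_zero]

lemma HasIndepIncrements.indepFun_values_pair_increments [OrderBot ι]
    (hX : HasIndepIncrements X P) (hXm : ∀ s, Measurable (X s)) (hX0 : ∀ᵐ ω ∂P, X ⊥ ω = 0)
    {m : ℕ} {ts : Fin (m + 1) → ι} (hts : Monotone ts) {t T : ι} (hlt : ts (Fin.last m) ≤ t)
    (htT : t ≤ T) :
    IndepFun (fun ω i => X (ts i) ω)
      (fun ω => (X t ω - X (ts (Fin.last m)) ω, X T ω - X t ω)) P := by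
  let τ : ℕ → ι
    | 0 => ⊥
    | l + 1 => if h : l ≤ m then ts ⟨l, by omega⟩ else if l = m + 1 then t else T
  have hτ : Monotone τ := by
    refine monotone_nat_of_le_succ fun l => ?_
    rcases l with _ | l
    · exact bot_le
    simp only [τ]
    split_ifs <;> first
      | omega
      | exact le_rfl
      | exact htT
      | exact hts (Fin.mk_le_mk.2 (by omega))
      | exact (hts (Fin.le_last _)).trans hlt
  have h := (hX.indepFun_values_increments hXm hτ hX0 (m + 1) 2).comp measurable_id
    (ψ := fun x : Fin 2 → E => (x 0, x 1)) (by fun_prop)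
  convert h using 1
  · funext ω i
    simp [τ, i.is_le]
  · funext ω
    simp [τ, Fin.last]

end IndepIncrements

section Markov

variable {Ω α β γ δ : Type*} [MeasurableSpace Ω] [MeasurableSpace α] [MeasurableSpace β]
  [MeasurableSpace γ] [MeasurableSpace δ] {P : Measure Ω} [IsFiniteMeasure P]
  {V : Ω → α} {D : Ω → δ}

lemma IndepFun.setLIntegral_preimage_eq (hV : Measurable V) (hD : Measurable D)
    (hVD : IndepFun V D P) {H : α × δ → ℝ≥0∞} (hH : Measurable H) {A : Set α}
    (hA : MeasurableSet A) :
    ∫⁻ ω in V ⁻¹' A, H (V ω, D ω) ∂P = ∫⁻ v in A, ∫⁻ d, H (v, d) ∂(P.map D) ∂(P.map V) := by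
  have hmap := (indepFun_iff_map_prod_eq_prod_map_map hV.aemeasurable hD.aemeasurable).mp hVD
  rw [← lintegral_prod _ hH.aemeasurable, Measure.restrict_prod_eq_prod_univ, ← hmap,
    setLIntegral_map (hA.prod .univ) hH (hV.prodMk hD), Set.mk_preimage_prod, Set.preimage_univ,
    Set.inter_univ]

lemma IndepFun.setLIntegral_preimage_eq_of_comp (hV : Measurable V) (hD : Measurable D)
    (hVD : IndepFun V D P) {φ : α → β} (hφ : Measurable φ) {H₁ H₂ : β × δ → ℝ≥0∞}
    (hH₁ : Measurable H₁) (hH₂ : Measurable H₂)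
    (hH : ∀ s, MeasurableSet s → ∫⁻ ω in (φ ∘ V) ⁻¹' s, H₁ (φ (V ω), D ω) ∂P =
      ∫⁻ ω in (φ ∘ V) ⁻¹' s, H₂ (φ (V ω), D ω) ∂P)
    {A : Set α} (hA : MeasurableSet A) :
    ∫⁻ ω in V ⁻¹' A, H₁ (φ (V ω), D ω) ∂P = ∫⁻ ω in V ⁻¹' A, H₂ (φ (V ω), D ω) ∂P := by
  have hfreeze : ∀ {H : β × δ → ℝ≥0∞}, Measurable H → ∀ {A : Set α}, MeasurableSet A →
      ∫⁻ ω in V ⁻¹' A, H (φ (V ω), D ω) ∂P =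
        ∫⁻ v in A, ∫⁻ d, H (φ v, d) ∂(P.map D) ∂(P.map V) :=
    fun hH _ hA => hVD.setLIntegral_preimage_eq hV hD (hH.comp (hφ.prodMap measurable_id)) hA
  have hae : (fun z => ∫⁻ d, H₁ (z, d) ∂(P.map D)) =ᵐ[(P.map V).map φ]
      fun z => ∫⁻ d, H₂ (z, d) ∂(P.map D) := by
    refine ae_eq_of_forall_setLIntegral_eq_of_sigmaFinite hH₁.lintegral_prod_right'
      hH₂.lintegral_prod_right' fun s hs _ => ?_
    rw [setLIntegral_map hs hH₁.lintegral_prod_right' hφ,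
      setLIntegral_map hs hH₂.lintegral_prod_right' hφ, ← hfreeze hH₁ (hφ hs),
      ← hfreeze hH₂ (hφ hs)]
    exact hH s hs
  rw [hfreeze hH₁ hA, hfreeze hH₂ hA]
  exact lintegral_congr_ae (ae_restrict_of_ae (ae_of_ae_map hφ.aemeasurable hae))

variable {ε : Type*} [MeasurableSpace ε] [StandardBorelSpace ε] [Nonempty ε]
  {φ : α → β} {F : β × δ → ε} {G : β × δ → γ} {Y : Ω → ε} {W : Ω → γ}

lemma condDistrib_prodMk_ae_eq_comap_of_indepFun (hV : Measurable V) (hD : Measurable D)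
    (hVD : IndepFun V D P) (hφ : Measurable φ) (hF : Measurable F) (hG : Measurable G)
    (hY : ∀ ω, Y ω = F (φ (V ω), D ω)) (hW : ∀ ω, W ω = G (φ (V ω), D ω)) :
    condDistrib Y (fun ω => (V ω, W ω)) P =ᵐ[P.map fun ω => (V ω, W ω)]
      (condDistrib Y (fun ω => (φ (V ω), W ω)) P).comap (Prod.map φ id)
        (hφ.prodMap measurable_id) := by
  have hZD : Measurable fun ω => (φ (V ω), D ω) := (hφ.comp hV).prodMk hD
  have hYm : Measurable Y := (funext hY : Y = _) ▸ hF.comp hZD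
  have hWm : Measurable W := (funext hW : W = _) ▸ hG.comp hZD
  set κ := condDistrib Y (fun ω => (φ (V ω), W ω)) P
  refine condDistrib_ae_eq_of_measure_eq_compProd _ hYm.aemeasurable ?_
  refine Measure.ext_prod₃_iff'.mpr fun {s t u} hs ht hu => ?_
  let H₁ : β × δ → ℝ≥0∞ := ((fun p => (G p, F p)) ⁻¹' (t ×ˢ u)).indicator 1
  let H₂ : β × δ → ℝ≥0∞ := (G ⁻¹' t).indicator fun p => κ (p.1, G p) u
  have hH₁ : Measurable H₁ :=
    measurable_one.indicator (measurableSet_preimage (hG.prodMk hF) (ht.prod hu))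
  have hH₂ : Measurable H₂ :=
    ((κ.measurable_coe hu).comp (measurable_fst.prodMk hG)).indicator (hG ht)
  have h₁ : ∀ A, ∫⁻ ω in V ⁻¹' A, H₁ (φ (V ω), D ω) ∂P = P (V ⁻¹' A ∩ W ⁻¹' t ∩ Y ⁻¹' u) := by
    intro A
    have : ∀ ω, H₁ (φ (V ω), D ω) = (W ⁻¹' t ∩ Y ⁻¹' u).indicator 1 ω := fun ω => by
      classical simp [H₁, Set.indicator_apply, hY, hW]
    simp_rw [this]
    rw [lintegral_indicator_one ((hWm ht).inter (hYm hu)),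
      Measure.restrict_apply ((hWm ht).inter (hYm hu))]
    congr 1
    ext; simp only [Set.mem_inter_iff, Set.mem_preimage]; tauto
  have h₂ : ∀ A, ∫⁻ ω in V ⁻¹' A, H₂ (φ (V ω), D ω) ∂P =
      ∫⁻ ω in V ⁻¹' A ∩ W ⁻¹' t, κ (φ (V ω), W ω) u ∂P := by
    intro A
    have : ∀ ω, H₂ (φ (V ω), D ω) = (W ⁻¹' t).indicator (fun ω => κ (φ (V ω), W ω) u) ω :=
      fun ω => by classical simp [H₂, Set.indicator_apply, hW]
    simp_rw [this]
    rw [setLIntegral_indicator (hWm ht), Set.inter_comm]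
  -- over the sets `(φ ∘ V) ⁻¹' s₀` the two sides agree by the defining property of `κ`
  have hmarkov := hVD.setLIntegral_preimage_eq_of_comp hV hD hφ hH₁ hH₂ (fun s₀ hs₀ =>
    (h₁ (φ ⁻¹' s₀)).trans ((setLIntegral_preimage_condDistrib ((hφ.comp hV).prodMk hWm)
      hYm.aemeasurable hu (hs₀.prod ht)).symm.trans (h₂ (φ ⁻¹' s₀)).symm)) hs
  rw [Measure.map_apply ((hV.prodMk hWm).prodMk hYm) ((hs.prod ht).prod hu),
    Measure.compProd_apply_prod (hs.prod ht) hu]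
  calc P _ = P (V ⁻¹' s ∩ W ⁻¹' t ∩ Y ⁻¹' u) := rfl
    _ = ∫⁻ ω in V ⁻¹' s, H₂ (φ (V ω), D ω) ∂P := (h₁ s).symm.trans hmarkov
    _ = ∫⁻ ω in V ⁻¹' s ∩ W ⁻¹' t, κ (φ (V ω), W ω) u ∂P := h₂ s
    _ = _ := (setLIntegral_map (hs.prod ht)
      ((κ.comap (Prod.map φ id) (hφ.prodMap measurable_id)).measurable_coe hu)
      (hV.prodMk hWm)).symm

lemma condExp_sup_comap_ae_eq_of_indepFun (hV : Measurable V) (hD : Measurable D)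
    (hVD : IndepFun V D P) (hφ : Measurable φ) (hF : Measurable F) (hG : Measurable G)
    (hY : ∀ ω, Y ω = F (φ (V ω), D ω)) (hW : ∀ ω, W ω = G (φ (V ω), D ω))
    {E : Type*} [NormedAddCommGroup E] [NormedSpace ℝ E] [CompleteSpace E] {f : ε → E}
    (hf : StronglyMeasurable f) (hfY : Integrable (fun ω => f (Y ω)) P) :
    P[fun ω => f (Y ω) | MeasurableSpace.comap V ‹_› ⊔ MeasurableSpace.comap W ‹_›] =ᵐ[P]
      P[fun ω => f (Y ω) | MeasurableSpace.comap (φ ∘ V) ‹_› ⊔ MeasurableSpace.comap W ‹_›] := by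
  have hZD : Measurable fun ω => (φ (V ω), D ω) := (hφ.comp hV).prodMk hD
  have hYm : Measurable Y := (funext hY : Y = _) ▸ hF.comp hZD
  have hWm : Measurable W := (funext hW : W = _) ▸ hG.comp hZD
  rw [← MeasurableSpace.comap_prodMk, ← MeasurableSpace.comap_prodMk]
  filter_upwards [condExp_ae_eq_integral_condDistrib (hV.prodMk hWm) hYm.aemeasurable hf hfY,
    condExp_ae_eq_integral_condDistrib ((hφ.comp hV).prodMk hWm) hYm.aemeasurable hf hfY,
    ae_of_ae_map (hV.prodMk hWm).aemeasurable
      (condDistrib_prodMk_ae_eq_comap_of_indepFun hV hD hVD hφ hF hG hY hW)] with ω hVW hZW hκ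
  exact hVW.trans ((congrArg (fun κ => ∫ y, f y ∂κ) hκ).trans hZW.symm)

end Markov

end ProbabilityTheory

theorem levy_bridge_markov_general {Ω : Type*} [MeasurableSpace Ω]
    (P : Measure Ω) [IsProbabilityMeasure P]
    (L : ℝ → Ω → ℝ) (hLmeas : ∀ t, Measurable (L t))
    (hL0 : ∀ᵐ ω ∂P, L 0 ω = 0)
    (hindep : ∀ (n : ℕ) (u : Fin (n + 1) → ℝ), Monotone u → (∀ i, 0 ≤ u i) →
      iIndepFun
        (fun i : Fin n => fun ω => L (u i.succ) ω - L (u i.castSucc) ω) P)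
    (T t : ℝ) (m : ℕ) (ts : Fin (m + 1) → ℝ)
    (hts : StrictMono ts) (h0 : 0 ≤ ts 0) (hlt : ts (Fin.last m) < t) (htT : t ≤ T)
    (B : Set ℝ) (hB : MeasurableSet B) :
    P[fun ω => Set.indicator B (fun _ => (1 : ℝ)) (L t ω) |
        (⨆ i, MeasurableSpace.comap (L (ts i)) Real.measurableSpace) ⊔
          MeasurableSpace.comap (L T) Real.measurableSpace]
      =ᵐ[P]
    P[fun ω => Set.indicator B (fun _ => (1 : ℝ)) (L t ω) |
        MeasurableSpace.comap (L (ts (Fin.last m))) Real.measurableSpace ⊔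
          MeasurableSpace.comap (L T) Real.measurableSpace] := by
  have hts0 : ∀ i, 0 ≤ ts i := fun i => h0.trans (hts.monotone (Fin.zero_le i))
  have ht0 : 0 ≤ t := (hts0 _).trans hlt.le
  have hX : HasIndepIncrements (fun s : ℝ≥0 => L s) P :=
    fun n u hu => hindep n (fun i => u i) (NNReal.coe_mono.comp hu) fun i => (u i).2
  have hVD : IndepFun (fun ω i => L (ts i) ω)
      (fun ω => (L t ω - L (ts (Fin.last m)) ω, L T ω - L t ω)) P :=
    hX.indepFun_values_pair_increments (fun s => hLmeas s) (by simpa using hL0)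
      (ts := fun i => ⟨ts i, hts0 i⟩) (fun _ _ hij => hts.monotone hij) (t := ⟨t, ht0⟩)
      (T := ⟨T, ht0.trans htT⟩) hlt.le htT
  rw [← MeasurableSpace.comap_pi_eq_iSup (fun i => L (ts i))]
  exact condExp_sup_comap_ae_eq_of_indepFun (measurable_pi_lambda _ fun i => hLmeas _)
    (by fun_prop) hVD (measurable_pi_apply (Fin.last m)) (F := fun p => p.1 + p.2.1)
    (G := fun p => p.1 + p.2.1 + p.2.2) (by fun_prop) (by fun_prop) (fun ω => by ring)
    (fun ω => by ring) (stronglyMeasurable_const.indicator hB)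
    ((integrable_const 1).indicator (hLmeas t hB))

/-- The bridge of a Lévy process pinned at its terminal value is a Markov process:
conditionally on the past values `L_{t_1}, …, L_{t_m}` and the terminal value `L_T`,
the law of `L_t` depends only on `(L_{t_m}, L_T)`. -/
theorem levy_bridge_markov {Ω : Type*} [MeasurableSpace Ω]
    (P : Measure Ω) [IsProbabilityMeasure P]
    (L : ℝ → Ω → ℝ) (hLmeas : ∀ t, Measurable (L t))
    (hL0 : ∀ᵐ ω ∂P, L 0 ω = 0)
    (hindep : ∀ (n : ℕ) (u : Fin (n + 1) → ℝ), Monotone u → (∀ i, 0 ≤ u i) →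
      iIndepFun
        (fun i : Fin n => fun ω => L (u i.succ) ω - L (u i.castSucc) ω) P)
    (hstat : ∀ s t : ℝ, 0 ≤ s → s ≤ t →
      Measure.map (fun ω => L t ω - L s ω) P = Measure.map (L (t - s)) P)
    (hdens : ∀ t : ℝ, 0 < t → Measure.map (L t) P ≪ (volume : Measure ℝ))
    (T t : ℝ) (m : ℕ) (ts : Fin (m + 1) → ℝ)
    (hts : StrictMono ts) (h0 : 0 ≤ ts 0) (hlt : ts (Fin.last m) < t) (htT : t ≤ T)
    (B : Set ℝ) (hB : MeasurableSet B) :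
    P[fun ω => Set.indicator B (fun _ => (1 : ℝ)) (L t ω) |
        (⨆ i, MeasurableSpace.comap (L (ts i)) Real.measurableSpace) ⊔
          MeasurableSpace.comap (L T) Real.measurableSpace]
      =ᵐ[P]
    P[fun ω => Set.indicator B (fun _ => (1 : ℝ)) (L t ω) |
        MeasurableSpace.comap (L (ts (Fin.last m))) Real.measurableSpace ⊔
          MeasurableSpace.comap (L T) Real.measurableSpace] :=
  levy_bridge_markov_general P L hLmeas hL0 hindep T t m ts hts h0 hlt htT B hB
end

section
/- Let 0 = t_0 < t_1 < ⋯ < t_n = T partition [0,T], let {f_t} be a convolution semigroup of densities, and let ν(dz) = p(z)dz be absolutely continuous with 0 < f_T(z) < ∞ ν-a.e. Then the joint density of the increments Δ_i = L_{t_i,T} − L_{t_{i−1},T} of the Lévy random bridge LRB_C([0,T],{f_t},ν) is (y_1,…,y_n) ↦ (p(Σ y_i)/f_T(Σ y_i)) ∏_{i=1}^n f_{α_i}(y_i), where α_i = t_i − t_{i−1}; i.e., the increments have a generalized multivariate Liouville distribution. -/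
/-!
The increment map `x ↦ (x i - x (i - 1))ᵢ` is linear with a unipotent lower triangular matrix,
so it is a measurable embedding preserving Lebesgue measure on `ℝⁿ`. Pushing the finite-dimensional
density of the bridge forward along it therefore only substitutes increments for positions, and
the telescoping identity `∑ (x i - x (i - 1)) = x (n - 1)` turns `p(x_n) / f_T(x_n)` into
`p(∑ yᵢ) / f_T(∑ yᵢ)`.
-/

open MeasureTheory Real

/-- Predecessor value: `prevR v i = v (i-1)` with the convention `v (-1) = 0`. -/
def prevR {n : ℕ} (v : Fin n → ℝ) (i : Fin n) : ℝ :=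
  if (i : ℕ) = 0 then 0
  else v ⟨(i : ℕ) - 1, Nat.lt_of_le_of_lt (Nat.sub_le _ _) i.isLt⟩

/-- If `f` is not a.e. measurable then neither is `g ∘ f`, so unlike `Measure.map_map` no
measurability of `f` is needed. -/
theorem MeasurableEmbedding.map_map {α β γ : Type*} [MeasurableSpace α] [MeasurableSpace β]
    [MeasurableSpace γ] {g : β → γ} (hg : MeasurableEmbedding g) (μ : Measure α) (f : α → β) :
    (μ.map f).map g = μ.map (g ∘ f) := by
  by_cases hf : AEMeasurable f μ
  · exact AEMeasurable.map_map_of_aemeasurable hg.measurable.aemeasurable hf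
  · rw [Measure.map_of_not_aemeasurable hf,
      Measure.map_of_not_aemeasurable (mt hg.aemeasurable_comp_iff.1 hf), Measure.map_zero]

theorem MeasurableEmbedding.map_withDensity_comp {β γ : Type*} [MeasurableSpace β]
    [MeasurableSpace γ] {g : β → γ} (hg : MeasurableEmbedding g) (μ : Measure β)
    (h : γ → ENNReal) : (μ.withDensity (h ∘ g)).map g = (μ.map g).withDensity h := by
  ext s hs
  rw [hg.map_apply, withDensity_apply _ hs, withDensity_apply _ (hg.measurable hs),
    hg.restrict_map, hg.lintegral_map]
  rfl

theorem prevR_comp {n : ℕ} {g : ℝ → ℝ} (hg : g 0 = 0) (v : Fin n → ℝ) (i : Fin n) :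
    prevR (g ∘ v) i = g (prevR v i) := by
  unfold prevR
  split_ifs <;> simp [hg]

theorem prevR_single {n : ℕ} (i j : Fin n) :
    prevR (Pi.single j (1 : ℝ)) i = if (i : ℕ) = j + 1 then 1 else 0 := by
  unfold prevR
  split_ifs <;> simp [Pi.single_apply, Fin.ext_iff] <;> omega

theorem sum_sub_prevR {n : ℕ} (x : Fin n → ℝ) (h : n - 1 < n) :
    ∑ i, (x i - prevR x i) = x ⟨n - 1, h⟩ := by
  set w : ℕ → ℝ := fun k => if hk : 0 < k ∧ k ≤ n then x ⟨k - 1, by omega⟩ else 0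
  have hw : ∀ i : Fin n, x i - prevR x i = w (i + 1) - w i := by
    intro i
    have hx : w (i + 1) = x i := by simp [w, i.isLt]
    rw [hx]
    unfold prevR
    split_ifs with hi
    · simp [w, hi]
    · simp [w, Nat.pos_of_ne_zero hi, i.isLt.le]
  calc ∑ i, (x i - prevR x i) = ∑ k ∈ Finset.range n, (w (k + 1) - w k) := by
        rw [Finset.sum_range fun k => w (k + 1) - w k]
        exact Finset.sum_congr rfl fun i _ => hw i
    _ = x ⟨n - 1, h⟩ := by
        rw [Finset.sum_range_sub]
        simp [w, dif_pos (show 0 < n by omega)]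

def increments (n : ℕ) : (Fin n → ℝ) →ₗ[ℝ] (Fin n → ℝ) where
  toFun x i := x i - prevR x i
  map_add' x y := by
    ext i
    by_cases hi : (i : ℕ) = 0 <;> simp [prevR, hi]
    ring
  map_smul' c x := by
    ext i
    by_cases hi : (i : ℕ) = 0 <;> simp [prevR, hi]
    ring

theorem det_increments (n : ℕ) : LinearMap.det (increments n) = 1 := by
  have hentry : ∀ i j, LinearMap.toMatrix' (increments n) i j =
      (if i = j then 1 else 0) - if (i : ℕ) = j + 1 then 1 else 0 := by
    intro i j
    rw [LinearMap.toMatrix'_apply]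
    simp [increments, prevR_single, Pi.single_apply]
  rw [← LinearMap.det_toMatrix', Matrix.det_of_isLowerTriangular]
  · simp [hentry]
  · intro i j hij
    have hlt : (i : ℕ) < j := hij
    simp [hentry, Fin.ext_iff, show (i : ℕ) ≠ j by omega, show (i : ℕ) ≠ j + 1 by omega]

theorem measurableEmbedding_increments (n : ℕ) : MeasurableEmbedding (increments n) :=
  ((increments n).equivOfDetNeZero (by simp [det_increments])).toContinuousLinearEquiv
    |>.toHomeomorph.measurableEmbedding

theorem map_increments_volume (n : ℕ) :
    (volume : Measure (Fin n → ℝ)).map (increments n) = volume := by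
  simpa [det_increments] using
    Real.map_linearMap_volume_pi_eq_smul_volume_pi (f := increments n) (by simp [det_increments])

/-- The increments `Δ_i = L_{t_i,T} − L_{t_{i−1},T}` of a Lévy random bridge with
absolutely continuous terminal law `ν(dz) = p(z)dz` have joint density
`(y_1,…,y_n) ↦ (p(Σ y_i)/f_T(Σ y_i)) ∏ f_{α_i}(y_i)` — a generalized multivariate
Liouville distribution. The LRB is characterized by its finite-dimensional density
`(p(x_n)/f_T(x_n)) ∏ f_{t_i−t_{i−1}}(x_i − x_{i−1})` at the times `t_1 < ⋯ < t_n = T`. -/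
theorem lrb_increments_liouville {Ω : Type*} [MeasurableSpace Ω]
    (P : Measure Ω)
    (L : ℝ → Ω → ℝ)
    (hL0 : ∀ ω, L 0 ω = 0)
    (f : ℝ → ℝ → ℝ)
    (p : ℝ → ℝ)
    (T : ℝ)
    (n : ℕ) (hn : 0 < n) (t : Fin n → ℝ)
    (hjoint : Measure.map (fun ω => fun i => L (t i) ω) P
      = (volume : Measure (Fin n → ℝ)).withDensity fun x =>
          ENNReal.ofReal ((p (x ⟨n - 1, by omega⟩) / f T (x ⟨n - 1, by omega⟩)) *
            ∏ i, f (t i - prevR t i) (x i - prevR x i))) :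
    Measure.map (fun ω => fun i => L (t i) ω - L (prevR t i) ω) P
      = (volume : Measure (Fin n → ℝ)).withDensity fun y =>
          ENNReal.ofReal ((p (∑ i, y i) / f T (∑ i, y i)) *
            ∏ i, f (t i - prevR t i) (y i)) := by
  set density : (Fin n → ℝ) → ENNReal := fun y =>
    ENNReal.ofReal ((p (∑ i, y i) / f T (∑ i, y i)) * ∏ i, f (t i - prevR t i) (y i))
  have hincr : (fun ω i => L (t i) ω - L (prevR t i) ω) =
      increments n ∘ fun ω i => L (t i) ω := by
    funext ω i
    exact congrArg (L (t i) ω - ·) (prevR_comp (g := (L · ω)) (hL0 ω) t i).symm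
  have hpath : ∀ x : Fin n → ℝ, ∑ i, increments n x i = x ⟨n - 1, by omega⟩ :=
    fun x => sum_sub_prevR x _
  have hdensity : (fun x : Fin n → ℝ => ENNReal.ofReal
      ((p (x ⟨n - 1, by omega⟩) / f T (x ⟨n - 1, by omega⟩)) *
        ∏ i, f (t i - prevR t i) (x i - prevR x i))) = density ∘ increments n := by
    funext x
    simp only [density, Function.comp, hpath]
    rfl
  rw [hincr, ← (measurableEmbedding_increments n).map_map, hjoint, hdensity,
    (measurableEmbedding_increments n).map_withDensity_comp, map_increments_volume]
end
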